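/- Let R, R̂ : ℝ → Matrix (Fin 3) (Fin 3) ℝ and ω, ω̂ : ℝ → ℝ³. Suppose that for every t, R t and R̂ t lie in SO(3) (i.e. (R t)ᵀ * R t = 1, det (R t) = 1, and likewise for R̂ t), and that R and R̂ satisfy the kinematics HasDerivAt R (R t * S(ω t)) t and HasDerivAt R̂ (R̂ t * S(ω̂ t)) t. Define R̃ t := (R̂ t)ᵀ * R t and ω̃ t := ω t - (R̃ t)ᵀ *ᵥ ω̂ t. Then for every t, HasDerivAt R̃ (R̃ t * S(ω̃ t)) t; i.e. the attitude error satisfies the kinematic relation dR̃/dt = R̃ S(ω̃). -/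

import Mathlib

/-!
Differentiating `R̃ = R̂ᵀ R` gives `dR̃/dt = -S(ω̂) R̃ + R̃ S(ω)`. For every 3×3 matrix `M`,
`Mᵀ S(v) M = S(adj(M) v)`; for a rotation `adj(M) = Mᵀ = M⁻¹`, so applied to `M = R̃` it
yields `R̃ S(R̃ᵀ ω̂) = S(ω̂) R̃`, which rewrites the first term as `-R̃ S(R̃ᵀ ω̂)`.
-/

open Matrix
noncomputable section

/-- `ℝ³` as Euclidean space (vectors `Fin 3 → ℝ` with the Euclidean norm). -/
abbrev R3 : Type := EuclideanSpace ℝ (Fin 3)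

/-- Skew-symmetric cross-product matrix `S(x)` of a vector `x ∈ ℝ³`. -/
def S (x : R3) : Matrix (Fin 3) (Fin 3) ℝ :=
  !![0, -x 2, x 1; x 2, 0, -x 0; -x 1, x 0, 0]

/-- Projection matrix `Π_y := I - y yᵀ` onto the plane orthogonal to `y`. -/
def proj (y : R3) : Matrix (Fin 3) (Fin 3) ℝ := 1 - Matrix.vecMulVec y y

/-- Matrix–vector product, with the result regarded as an element of `ℝ³`
(so that `‖·‖` is the Euclidean norm). -/
def mulv (M : Matrix (Fin 3) (Fin 3) ℝ) (v : R3) : R3 := WithLp.toLp 2 (M.mulVec v)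

/-- Cross product `×₃` regarded as an operation on `ℝ³`. -/
def cross (a b : R3) : R3 := WithLp.toLp 2 (WithLp.ofLp a ⨯₃ WithLp.ofLp b)

/-- Rodrigues rotation matrix `R(λ̊, λ) := I + 2 S(λ)(λ̊ I + S(λ))` of a
quaternion pair `(λ̊, λ)`. -/
def rod (q0 : ℝ) (qv : R3) : Matrix (Fin 3) (Fin 3) ℝ :=
  1 + 2 • (S qv * (q0 • 1 + S qv))

attribute [local instance] Matrix.normedAddCommGroup Matrix.normedSpace

-- The norm on matrices is the sup norm of the entries, so derivatives are entrywise.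
theorem Matrix.hasDerivAt_iff {𝕜 : Type*} [NontriviallyNormedField 𝕜] {m n : Type*} [Fintype m]
    [Fintype n] {A : 𝕜 → Matrix m n 𝕜} {A' : Matrix m n 𝕜} {t : 𝕜} :
    HasDerivAt A A' t ↔ ∀ i j, HasDerivAt (fun s => A s i j) (A' i j) t :=
  hasDerivAt_pi.trans (forall_congr' fun _ => hasDerivAt_pi)

theorem HasDerivAt.matrix_transpose {𝕜 : Type*} [NontriviallyNormedField 𝕜] {m n : Type*}
    [Fintype m] [Fintype n] {A : 𝕜 → Matrix m n 𝕜} {A' : Matrix m n 𝕜} {t : 𝕜}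
    (hA : HasDerivAt A A' t) : HasDerivAt (fun s => (A s)ᵀ) A'ᵀ t :=
  Matrix.hasDerivAt_iff.2 fun i j => Matrix.hasDerivAt_iff.1 hA j i

theorem HasDerivAt.matrix_mul {𝕜 : Type*} [NontriviallyNormedField 𝕜] {m n p : Type*}
    [Fintype m] [Fintype n] [Fintype p] {A : 𝕜 → Matrix m n 𝕜} {B : 𝕜 → Matrix n p 𝕜}
    {A' : Matrix m n 𝕜} {B' : Matrix n p 𝕜} {t : 𝕜}
    (hA : HasDerivAt A A' t) (hB : HasDerivAt B B' t) :
    HasDerivAt (fun s => A s * B s) (A' * B t + A t * B') t := by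
  refine Matrix.hasDerivAt_iff.2 fun i j => ?_
  simp only [Matrix.mul_apply, Matrix.add_apply, ← Finset.sum_add_distrib]
  exact HasDerivAt.fun_sum fun k _ =>
    (Matrix.hasDerivAt_iff.1 hA i k).mul (Matrix.hasDerivAt_iff.1 hB k j)

namespace Matrix

variable {n : Type*} [Fintype n] [DecidableEq n]

theorem mem_specialOrthogonalGroup_iff_transpose_mul {A : Matrix n n ℝ} :
    A ∈ specialOrthogonalGroup n ℝ ↔ Aᵀ * A = 1 ∧ A.det = 1 := by
  rw [mem_specialOrthogonalGroup_iff, mem_orthogonalGroup_iff']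

theorem transpose_mul_mem_specialOrthogonalGroup {A B : Matrix n n ℝ}
    (hA : A ∈ specialOrthogonalGroup n ℝ) (hB : B ∈ specialOrthogonalGroup n ℝ) :
    Aᵀ * B ∈ specialOrthogonalGroup n ℝ := by
  rw [mem_specialOrthogonalGroup_iff] at hA hB ⊢
  have h := mul_mem (Unitary.star_mem hA.1) hB.1
  rw [star_eq_conjTranspose, conjTranspose_eq_transpose_of_trivial] at h
  exact ⟨h, by rw [det_mul, det_transpose, hA.2, hB.2, one_mul]⟩

theorem adjugate_eq_transpose_of_mem_specialOrthogonalGroup {A : Matrix n n ℝ}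
    (hA : A ∈ specialOrthogonalGroup n ℝ) : A.adjugate = Aᵀ := by
  rw [mem_specialOrthogonalGroup_iff, mem_orthogonalGroup_iff] at hA
  calc A.adjugate = A.adjugate * A * Aᵀ := by rw [Matrix.mul_assoc, hA.1, Matrix.mul_one]
    _ = Aᵀ := by rw [adjugate_mul, hA.2, one_smul, Matrix.one_mul]

end Matrix

theorem S_sub (a b : R3) : S (a - b) = S a - S b := by
  ext i j; fin_cases i <;> fin_cases j <;> simp [S] <;> ring

theorem S_transpose (x : R3) : (S x)ᵀ = -S x := by
  ext i j; fin_cases i <;> fin_cases j <;> simp [S]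

theorem transpose_mul_S_mul (M : Matrix (Fin 3) (Fin 3) ℝ) (v : R3) :
    Mᵀ * S v * M = S (mulv M.adjugate v) := by
  ext i j
  fin_cases i <;> fin_cases j <;>
    simp [S, mulv, adjugate_fin_three, Matrix.mul_apply, dotProduct, Fin.sum_univ_three] <;> ring

theorem mul_S_mulv_transpose_of_mem_specialOrthogonalGroup {M : Matrix (Fin 3) (Fin 3) ℝ}
    (hM : M ∈ specialOrthogonalGroup (Fin 3) ℝ) (v : R3) :
    M * S (mulv Mᵀ v) = S v * M := by
  rw [← adjugate_eq_transpose_of_mem_specialOrthogonalGroup hM, ← transpose_mul_S_mul,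
    ← Matrix.mul_assoc, ← Matrix.mul_assoc, (mem_orthogonalGroup_iff _ _).1 hM.1, Matrix.one_mul]

/-- kinematics of the attitude error:
if `Ṙ = R S(ω)` and `R̂̇ = R̂ S(ω̂)` with `R, R̂ ∈ SO(3)`, then
`R̃ := R̂ᵀ R` satisfies `R̃̇ = R̃ S(ω̃)` with `ω̃ := ω - R̃ᵀ ω̂`. -/
theorem stmt_12 (R Rh : ℝ → Matrix (Fin 3) (Fin 3) ℝ) (w wh : ℝ → R3)
    (hSO : ∀ t, (R t)ᵀ * R t = 1 ∧ (R t).det = 1)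
    (hSOh : ∀ t, (Rh t)ᵀ * Rh t = 1 ∧ (Rh t).det = 1)
    (hR : ∀ t, HasDerivAt R (R t * S (w t)) t)
    (hRh : ∀ t, HasDerivAt Rh (Rh t * S (wh t)) t) :
    ∀ t, HasDerivAt (fun s => (Rh s)ᵀ * R s)
      (((Rh t)ᵀ * R t) * S (w t - mulv ((Rh t)ᵀ * R t)ᵀ (wh t))) t := by
  intro t
  have hE : (Rh t)ᵀ * R t ∈ specialOrthogonalGroup (Fin 3) ℝ :=
    transpose_mul_mem_specialOrthogonalGroup
      (mem_specialOrthogonalGroup_iff_transpose_mul.2 (hSOh t))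
      (mem_specialOrthogonalGroup_iff_transpose_mul.2 (hSO t))
  convert (hRh t).matrix_transpose.matrix_mul (hR t) using 1
  rw [S_sub, Matrix.mul_sub, mul_S_mulv_transpose_of_mem_specialOrthogonalGroup hE,
    Matrix.transpose_mul, S_transpose]
  noncomm_ring
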